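/- arXiv:1509.07858 — 2 statements merged into one kernel-verified Lean document; each statement's English description precedes it below -/
import Mathlib

section
/- Let ([F_n, Z_n]) be a Følner monotiling of a countably infinite group Γ such that e ∈ F_n for every n. Then for every fixed k, |Int_{F_k}(F_n) ∩ Z_k| / |F_n| → 1/|F_k| as n → ∞. -/
open Filter Pointwise
open scoped Classical

/-- The `K`-boundary of a finite set `F` in a group: `K⁻¹F ∩ K⁻¹Fᶜ`. -/
noncomputable def kBoundary {Γ : Type*} [Group Γ] (K F : Finset Γ) : Finset Γ :=
  (K⁻¹ * F).filter fun g => ∃ k ∈ K, k * g ∉ F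

/-- The `K`-interior of a finite set `F`: `F \ ∂_K(F)`. -/
noncomputable def kInterior {Γ : Type*} [Group Γ] (K F : Finset Γ) : Finset Γ :=
  F \ kBoundary K F

lemma mem_kInterior_iff {Γ : Type*} [Group Γ] {K F : Finset Γ} (hK : (1:Γ) ∈ K) {z : Γ} :
    z ∈ kInterior K F ↔ z ∈ F ∧ ∀ f ∈ K, f * z ∈ F := by
  unfold kInterior kBoundary
  simp only [Finset.mem_sdiff, Finset.mem_filter, not_and, not_exists, and_congr_right_iff]
  intro hz
  have hzm : z ∈ K⁻¹ * F := by
    have := Finset.mul_mem_mul (Finset.inv_mem_inv hK) hz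
    simpa using this
  constructor
  · intro h f hf
    by_contra hfz
    exact (h hzm) f hf hfz
  · intro h _ f hf hfz
    exact hfz (h f hf)

/-- For a Følner monotiling `([Fₙ, Zₙ])` with `e ∈ Fₙ`, and fixed `k`,
`|Int_{F_k}(F_n) ∩ Z_k| / |F_n| → 1/|F_k|`. -/
theorem folner_monotiling_interior_centers_ratio {Γ : Type*} [Group Γ] [Countable Γ]
    [Infinite Γ] (F : ℕ → Finset Γ) (Z : ℕ → Set Γ)
    (htile : ∀ n, ∀ γ : Γ, ∃! z : Γ, z ∈ Z n ∧ ∃ f ∈ F n, γ = f * z)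
    (hfolner : ∀ K : Finset Γ, K.Nonempty → Tendsto
      (fun n => ((symmDiff (F n) (K * F n)).card : ℝ) / (F n).card) atTop (nhds 0))
    (hid : ∀ n, (1 : Γ) ∈ F n) (k : ℕ) :
    Tendsto
      (fun n => ((((kInterior (F k) (F n) : Finset Γ) : Set Γ) ∩ Z k).ncard : ℝ) / (F n).card)
      atTop (nhds (1 / (F k).card)) := by
  classical
  have hck : (0:ℕ) < (F k).card := Finset.card_pos.2 ⟨1, hid k⟩
  have hc : (0:ℝ) < (F k).card := by exact_mod_cast hck
  set S : Finset Γ := F k * (F k)⁻¹ with hS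
  set D : ℕ → Finset Γ := fun n => symmDiff (F n) (S * F n) with hD
  set T : ℕ → Finset Γ := fun n => (kInterior (F k) (F n)).filter (· ∈ Z k) with hT
  have hFn : ∀ n, (0:ℝ) < (F n).card := by
    intro n; exact_mod_cast Finset.card_pos.2 ⟨1, hid n⟩
  have hncard : ∀ n,
      (((kInterior (F k) (F n) : Finset Γ) : Set Γ) ∩ Z k).ncard = (T n).card := by
    intro n
    rw [show ((kInterior (F k) (F n) : Finset Γ) : Set Γ) ∩ Z k = ↑(T n) by
      ext x; simp [hT]]
    exact Set.ncard_coe_finset _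
  -- upper bound: |F k| * |T n| ≤ |F n|
  have hupper : ∀ n, (F k).card * (T n).card ≤ (F n).card := by
    intro n
    have hcard : ((F k) ×ˢ (T n)).card = (F k).card * (T n).card := Finset.card_product _ _
    rw [← hcard]
    apply Finset.card_le_card_of_injOn (fun p => p.1 * p.2)
    · rintro ⟨f, z⟩ hp
      rw [Finset.mem_coe, Finset.mem_product] at hp
      obtain ⟨hf, hz⟩ := hp
      have hz' := (Finset.mem_filter.1 hz).1
      exact ((mem_kInterior_iff (hid k)).1 hz').2 f hf
    · rintro ⟨f, z⟩ hp ⟨f', z'⟩ hp' h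
      simp only [Finset.coe_product, Set.mem_prod, Finset.mem_coe] at hp hp'
      have hzZ : z ∈ Z k := (Finset.mem_filter.1 hp.2).2
      have hz'Z : z' ∈ Z k := (Finset.mem_filter.1 hp'.2).2
      simp only at h
      obtain ⟨w, _, hw⟩ := htile k (f * z)
      have h1 : z = w := hw z ⟨hzZ, f, hp.1, rfl⟩
      have h2 : z' = w := hw z' ⟨hz'Z, f', hp'.1, h⟩
      have hzz : z = z' := h1.trans h2.symm
      subst hzz
      have : f = f' := by
        have := h
        exact mul_right_cancel this
      simp [this]
  -- lower bound: |F n| ≤ |F k| * |T n| + |S| * |D n|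
  have hlower : ∀ n, (F n).card ≤ (F k).card * (T n).card + S.card * (D n).card := by
    intro n
    have hsub : F n ⊆ (F k * T n) ∪ (S⁻¹ * D n) := by
      intro γ hγ
      obtain ⟨z, ⟨hzZ, f', hf', hγz⟩, _⟩ := htile k γ
      by_cases hzi : z ∈ kInterior (F k) (F n)
      · apply Finset.mem_union_left
        rw [Finset.mem_mul]
        exact ⟨f', hf', z, Finset.mem_filter.2 ⟨hzi, hzZ⟩, hγz.symm⟩
      · apply Finset.mem_union_right
        have hbad : ∃ f ∈ F k, f * z ∉ F n := by
          by_cases hzF : z ∈ F n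
          · by_contra hno
            push_neg at hno
            exact hzi ((mem_kInterior_iff (hid k)).2 ⟨hzF, hno⟩)
          · exact ⟨1, hid k, by simpa using hzF⟩
        obtain ⟨f, hf, hfz⟩ := hbad
        set g : Γ := f * f'⁻¹ with hg
        have hgS : g ∈ S := Finset.mul_mem_mul hf (Finset.inv_mem_inv hf')
        have hgγ : g * γ = f * z := by
          rw [hγz, hg]; group
        have hgγD : g * γ ∈ D n := by
          rw [hD]
          apply Finset.mem_symmDiff.2
          right
          constructor
          · exact Finset.mul_mem_mul hgS hγ
          · rw [hgγ]; exact hfz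
        have : γ = g⁻¹ * (g * γ) := by group
        rw [this, Finset.mem_mul]
        exact ⟨g⁻¹, Finset.inv_mem_inv hgS, g * γ, hgγD, rfl⟩
    calc (F n).card ≤ ((F k * T n) ∪ (S⁻¹ * D n)).card := Finset.card_le_card hsub
      _ ≤ (F k * T n).card + (S⁻¹ * D n).card := Finset.card_union_le _ _
      _ ≤ (F k).card * (T n).card + S.card * (D n).card := by
          gcongr
          · exact Finset.card_mul_le
          · calc (S⁻¹ * D n).card ≤ S⁻¹.card * (D n).card := Finset.card_mul_le
              _ = S.card * (D n).card := by rw [Finset.card_inv]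
  -- real analysis
  have hdz : Tendsto (fun n => ((D n).card : ℝ) / (F n).card) atTop (nhds 0) :=
    hfolner S ⟨1 * 1⁻¹, Finset.mul_mem_mul (hid k) (Finset.inv_mem_inv (hid k))⟩
  have key : Tendsto (fun n => ((T n).card : ℝ) / (F n).card) atTop (nhds (1 / (F k).card)) := by
    apply tendsto_of_tendsto_of_tendsto_of_le_of_le
      (g := fun n => 1 / (F k).card - (S.card / (F k).card) * (((D n).card : ℝ) / (F n).card))
      (h := fun n => 1 / (F k).card)
    · have : Tendsto (fun n => (S.card / (F k).card : ℝ) * (((D n).card : ℝ) / (F n).card))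
          atTop (nhds 0) := by
        simpa using hdz.const_mul ((S.card : ℝ) / (F k).card)
      simpa using (tendsto_const_nhds (x := (1 / (F k).card : ℝ))).sub this
    · exact tendsto_const_nhds
    · intro n
      have hb : ((F n).card : ℝ) ≤ (F k).card * (T n).card + S.card * (D n).card := by
        exact_mod_cast hlower n
      have hne : ((F k).card:ℝ) ≠ 0 := ne_of_gt hc
      have hne' : ((F n).card:ℝ) ≠ 0 := ne_of_gt (hFn n)
      dsimp only
      rw [show (1 / ((F k).card:ℝ) - (S.card / (F k).card) * (((D n).card:ℝ) / (F n).card))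
            = (((F n).card:ℝ) - S.card * (D n).card) / ((F k).card * (F n).card) by
          field_simp,
        show (((T n).card:ℝ) / (F n).card)
            = (((F k).card:ℝ) * (T n).card) / ((F k).card * (F n).card) by
          rw [mul_div_mul_left _ _ hne]]
      exact div_le_div_of_nonneg_right (by linarith) (mul_pos hc (hFn n)).le |>.trans_eq rfl
    · intro n
      have hb : ((F k).card : ℝ) * (T n).card ≤ (F n).card := by exact_mod_cast hupper n
      have hne : ((F k).card:ℝ) ≠ 0 := ne_of_gt hc
      dsimp only
      rw [show (((T n).card:ℝ) / (F n).card)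
            = (((F k).card:ℝ) * (T n).card) / ((F k).card * (F n).card) by
          rw [mul_div_mul_left _ _ hne],
        show (1 / ((F k).card:ℝ)) = (((F n).card:ℝ)) / ((F k).card * (F n).card) by
          rw [eq_div_iff (mul_pos hc (hFn n)).ne']; field_simp]
      exact div_le_div_of_nonneg_right hb (mul_pos hc (hFn n)).le |>.trans_eq rfl
  simpa only [hncard] using key
end

section
/- Let ([F_n, Z_n]) be a Følner monotiling of a countably infinite group Γ with e ∈ F_n for every n. Then for every fixed k, |F_n ∩ Z_k| / |F_n| → 1/|F_k| as n → ∞. -/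
open Filter Pointwise
open scoped Classical

/-- For a Følner monotiling `([Fₙ, Zₙ])` with `e ∈ Fₙ`, and fixed `k`,
`|F_n ∩ Z_k| / |F_n| → 1/|F_k|`. -/
theorem folner_monotiling_centers_ratio {Γ : Type*} [Group Γ] [Countable Γ]
    [Infinite Γ] (F : ℕ → Finset Γ) (Z : ℕ → Set Γ)
    (htile : ∀ n, ∀ γ : Γ, ∃! z : Γ, z ∈ Z n ∧ ∃ f ∈ F n, γ = f * z)
    (hfolner : ∀ K : Finset Γ, K.Nonempty → Tendsto
      (fun n => ((symmDiff (F n) (K * F n)).card : ℝ) / (F n).card) atTop (nhds 0))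
    (hid : ∀ n, (1 : Γ) ∈ F n) (k : ℕ) :
    Tendsto (fun n => (((F n : Set Γ) ∩ Z k).ncard : ℝ) / (F n).card)
      atTop (nhds (1 / (F k).card)) := by
  classical
  set K : ℝ := ((F k).card : ℝ) with hKdef
  have hKpos : 0 < K := by
    rw [hKdef]; exact_mod_cast Finset.card_pos.mpr ⟨1, hid k⟩
  have hKone : 1 ≤ K := by
    rw [hKdef]; exact_mod_cast Finset.card_pos.mpr ⟨1, hid k⟩
  -- the centers inside F n
  set Z' : ℕ → Finset Γ := fun n => (F n).filter (fun x => x ∈ Z k) with hZ'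
  have hncard : ∀ n, (((F n : Set Γ) ∩ Z k).ncard : ℝ) = ((Z' n).card : ℝ) := by
    intro n
    have : ((F n : Set Γ) ∩ Z k) = ↑(Z' n) := by
      ext x; simp [hZ', and_comm]
    rw [this, Set.ncard_coe_finset]
  -- the tile union T n
  set T : ℕ → Finset Γ := fun n => F k * Z' n with hT
  have hTcard : ∀ n, ((T n).card : ℝ) = K * (Z' n).card := by
    intro n
    have : (T n).card = (F k).card * (Z' n).card := by
      rw [hT]
      rw [Finset.card_mul_iff]
      rintro ⟨f₁, z₁⟩ ⟨hf₁, hz₁⟩ ⟨f₂, z₂⟩ ⟨hf₂, hz₂⟩ h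
      simp only at h hf₁ hz₁ hf₂ hz₂
      have hz₁' : z₁ ∈ Z k := (Finset.mem_filter.mp hz₁).2
      have hz₂' : z₂ ∈ Z k := (Finset.mem_filter.mp hz₂).2
      obtain ⟨z, hz, huniq⟩ := htile k (f₁ * z₁)
      have e₁ : z₁ = z := huniq z₁ ⟨hz₁', f₁, hf₁, rfl⟩
      have e₂ : z₂ = z := huniq z₂ ⟨hz₂', f₂, hf₂, h⟩
      have hzz : z₁ = z₂ := e₁.trans e₂.symm
      subst hzz
      have : f₁ = f₂ := mul_right_cancel h
      simp [this]
    rw [this]; push_cast; rfl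
  -- Claim B : F n \ T n ⊆ F k * (((F k)⁻¹ * F n) \ F n)
  have hB : ∀ n, F n \ T n ⊆ F k * (((F k)⁻¹ * F n) \ F n) := by
    intro n γ hγ
    obtain ⟨hγF, hγT⟩ := Finset.mem_sdiff.mp hγ
    obtain ⟨z, ⟨hzZ, f, hf, hfz⟩, -⟩ := htile k γ
    have hzFn : z ∉ F n := by
      intro hzF
      exact hγT (Finset.mem_mul.mpr ⟨f, hf, z, Finset.mem_filter.mpr ⟨hzF, hzZ⟩, hfz.symm⟩)
    have hzmem : z ∈ ((F k)⁻¹ * F n) \ F n := by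
      refine Finset.mem_sdiff.mpr ⟨?_, hzFn⟩
      refine Finset.mem_mul.mpr ⟨f⁻¹, by simpa using hf, γ, hγF, ?_⟩
      rw [hfz]; group
    exact Finset.mem_mul.mpr ⟨f, hf, z, hzmem, hfz.symm⟩
  -- Claim C : T n \ F n ⊆ (F k * F n) \ F n
  have hC : ∀ n, T n \ F n ⊆ (F k * F n) \ F n := by
    intro n γ hγ
    obtain ⟨hγT, hγF⟩ := Finset.mem_sdiff.mp hγ
    refine Finset.mem_sdiff.mpr ⟨?_, hγF⟩
    exact Finset.mul_subset_mul_left (Finset.filter_subset _ _) hγT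
  -- symmDiff bounds
  set s1 : ℕ → ℝ := fun n => ((symmDiff (F n) ((F k)⁻¹ * F n)).card : ℝ) with hs1
  set s2 : ℕ → ℝ := fun n => ((symmDiff (F n) (F k * F n)).card : ℝ) with hs2
  have hs1nn : ∀ n, 0 ≤ s1 n := fun n => Nat.cast_nonneg _
  have hs2nn : ∀ n, 0 ≤ s2 n := fun n => Nat.cast_nonneg _
  have hineq1 : ∀ n, ((F n).card : ℝ) ≤ (T n).card + K * s1 n := by
    intro n
    have h1 : (F n).card ≤ (F n \ T n).card + (T n).card :=
      Finset.card_le_card_sdiff_add_card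
    have h2 : (F n \ T n).card ≤ (F k).card * (symmDiff (F n) ((F k)⁻¹ * F n)).card := by
      calc (F n \ T n).card ≤ (F k * (((F k)⁻¹ * F n) \ F n)).card :=
            Finset.card_le_card (hB n)
        _ ≤ (F k).card * (((F k)⁻¹ * F n) \ F n).card := Finset.card_mul_le
        _ ≤ (F k).card * (symmDiff (F n) ((F k)⁻¹ * F n)).card := by
            refine Nat.mul_le_mul_left _ (Finset.card_le_card ?_)
            intro x hx
            rw [Finset.mem_symmDiff]
            exact Or.inr ⟨(Finset.mem_sdiff.mp hx).1, (Finset.mem_sdiff.mp hx).2⟩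
    have h3 := (Nat.cast_le (α := ℝ)).mpr (le_trans h1 (Nat.add_le_add_right h2 _))
    push_cast at h3
    simp only [hs1, hKdef]
    linarith
  have hineq2 : ∀ n, ((T n).card : ℝ) ≤ (F n).card + s2 n := by
    intro n
    have h1 : (T n).card ≤ (T n \ F n).card + (F n).card :=
      Finset.card_le_card_sdiff_add_card
    have h2 : (T n \ F n).card ≤ (symmDiff (F n) (F k * F n)).card := by
      refine Finset.card_le_card (fun x hx => ?_)
      rw [Finset.mem_symmDiff]
      have := hC n hx
      exact Or.inr ⟨(Finset.mem_sdiff.mp this).1, (Finset.mem_sdiff.mp this).2⟩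
    have h3 := (Nat.cast_le (α := ℝ)).mpr (le_trans h1 (Nat.add_le_add_right h2 _))
    push_cast at h3
    simp only [hs2]
    linarith
  -- positivity of |F n|
  have hbpos : ∀ n, (0:ℝ) < (F n).card := by
    intro n
    exact_mod_cast Finset.card_pos.mpr ⟨1, hid n⟩
  -- the squeeze
  rw [← tendsto_sub_nhds_zero_iff]
  have hlim : Tendsto (fun n => s1 n / (F n).card + s2 n / (F n).card) atTop (nhds 0) := by
    have := (hfolner (F k)⁻¹ (Finset.Nonempty.inv ⟨1, hid k⟩)).add (hfolner (F k) ⟨1, hid k⟩)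
    simpa using this
  refine squeeze_zero_norm (fun n => ?_) hlim
  have hb := hbpos n
  set a : ℝ := ((Z' n).card : ℝ) with ha
  set b : ℝ := ((F n).card : ℝ) with hbdef
  have hbound : |K * a - b| ≤ K * s1 n + s2 n := by
    rw [abs_le]
    constructor
    · have := hineq1 n
      rw [hTcard n] at this
      nlinarith [hs2nn n]
    · have := hineq2 n
      rw [hTcard n] at this
      nlinarith [hs1nn n, hKpos]
  rw [hncard n]
  have heq : a / b - 1 / K = (K * a - b) / (K * b) := by
    field_simp
  rw [heq, Real.norm_eq_abs, abs_div, abs_of_pos (by positivity : (0:ℝ) < K * b)]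
  rw [div_le_iff₀ (by positivity : (0:ℝ) < K * b)]
  have hexp : (s1 n / b + s2 n / b) * (K * b) = K * s1 n + K * s2 n := by
    field_simp
  rw [hexp]
  nlinarith [hs2nn n]
end
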